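/- For every integer n ≥ 1, ⟨r_n, l_n⟩ = (−1)^{n+1} / (n(n+1)(n+2)), where the inner product is taken in L²(0,1). -/

import Mathlib

open MeasureTheory Set

noncomputable section

namespace OrthoPoly

/-- The space `L²(0,1)`. -/
abbrev L2I := Lp ℝ 2 (volume.restrict (Set.Ioo (0 : ℝ) 1))

open Classical in
/-- Interpret a plain function as an element of `L²(0,1)`. -/
def toL2I (f : ℝ → ℝ) : L2I :=
  if h : MemLp f 2 (volume.restrict (Set.Ioo (0 : ℝ) 1)) then h.toLp f else 0

/-- Orthogonal projection onto (the closure of) a subspace. -/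
def projC (K : Submodule ℝ L2I) (f : L2I) : L2I :=
  (Submodule.orthogonalProjection K.topologicalClosure f : L2I)

/-- `r(x) = x·χ_{[0,1)}(x)`. -/
def rI : L2I := toL2I fun x => Set.indicator (Set.Ico (0 : ℝ) 1) (fun y => y) x

/-- `l(x) = (1−x)·χ_{[0,1)}(x)`. -/
def lI : L2I := toL2I fun x => Set.indicator (Set.Ico (0 : ℝ) 1) (fun y => 1 - y) x

/-- `U_n = {x(1−x)p(x)·χ_{[0,1)}(x) : deg p ≤ n−2}` for `n ≥ 2`, and `U_1 = {0}`. -/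
def Usub (n : ℕ) : Submodule ℝ L2I :=
  Submodule.span ℝ
    {f | ∃ p : Polynomial ℝ, (p = 0 ∨ p.natDegree + 2 ≤ n) ∧
      f = toL2I fun x => Set.indicator (Set.Ico (0 : ℝ) 1)
        (fun y => y * (1 - y) * p.eval y) x}

end OrthoPoly

/-!
On `[0,1)` the functions `r`, `l` and the generators of `U_n` are polynomials, and their
`L²(0,1)` inner products are integrals `∫₀¹ P Q`. Repeated integration by parts shows that
`D^{n+1} G` is orthogonal to `U_n` (i.e. to all polynomials of degree `≤ n` vanishing at `0` and
`1`) whenever `G` has roots of order `n` at `0` and `1`. For `G = xⁿ(1-x)ⁿ(nx+1)` the factor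
`nx + 1` makes `D^{n+1} G` vanish at `0`, so after normalising its value at `1` we get a
polynomial `ρ_n ⊥ U_n` with `x - ρ_n ∈ U_n`: this `ρ_n` is `r_n`. Finally
`⟪r_n, l_n⟫ = ⟪r_n, l⟫ = ∫₀¹ ρ_n (1 - x)`, which one more integration by parts
evaluates.
-/

open Polynomial

namespace OrthoPoly

lemma eval_iterate_derivative_eq_zero_of_pow_dvd {R : Type*} [CommRing R] {p : R[X]} {t : R}
    {n j : ℕ} (h : (X - C t) ^ n ∣ p) (hj : j < n) : (derivative^[j] p).eval t = 0 :=
  dvd_iff_isRoot.mp <| (dvd_pow_self _ (Nat.sub_ne_zero_of_lt hj)).trans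
    (pow_sub_dvd_iterate_derivative_of_pow_dvd j h)

lemma eval_iterate_derivative_eq_factorial_mul_coeff_taylor {R : Type*} [CommSemiring R]
    (p : R[X]) (r : R) (k : ℕ) :
    (derivative^[k] p).eval r = k.factorial * (taylor r p).coeff k := by
  rw [taylor_coeff, ← factorial_smul_hasseDeriv]
  simp [nsmul_eq_mul]

lemma coeff_X_pow_mul_succ {R : Type*} [CommSemiring R] (p : R[X]) (n : ℕ) :
    (X ^ n * p).coeff (n + 1) = (derivative p).eval 0 := by
  rw [add_comm, coeff_X_pow_mul', if_pos (by omega), Nat.add_sub_cancel,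
    ← coeff_zero_eq_eval_zero, coeff_derivative]
  simp

def polyIntegral (a b : ℝ) : ℝ[X] →ₗ[ℝ] ℝ where
  toFun P := ∫ x in a..b, P.eval x
  map_add' P Q := by
    simpa using intervalIntegral.integral_add (P.continuous.intervalIntegrable a b)
      (Q.continuous.intervalIntegrable a b)
  map_smul' c P := by simp

section PolyIntegral

variable {a b : ℝ}

lemma polyIntegral_apply (P : ℝ[X]) : polyIntegral a b P = ∫ x in a..b, P.eval x := rfl

lemma polyIntegral_derivative (P : ℝ[X]) :
    polyIntegral a b (derivative P) = P.eval b - P.eval a :=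
  intervalIntegral.integral_deriv_eq_sub' _ (funext fun _ => P.deriv)
    (fun _ _ => P.differentiableAt) P.derivative.continuousOn

lemma polyIntegral_derivative_mul (P Q : ℝ[X]) :
    polyIntegral a b (derivative P * Q) =
      P.eval b * Q.eval b - P.eval a * Q.eval a - polyIntegral a b (P * derivative Q) := by
  have h := polyIntegral_derivative (a := a) (b := b) (P * Q)
  rw [derivative_mul, map_add, eval_mul, eval_mul] at h
  linarith

lemma polyIntegral_iterate_derivative_mul_eq_zero {G q : ℝ[X]} {n : ℕ}
    (ha : (X - C a) ^ n ∣ G) (hb : (X - C b) ^ n ∣ G) (hqa : q.eval a = 0) (hqb : q.eval b = 0)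
    (hq : q.natDegree ≤ n) : polyIntegral a b (derivative^[n + 1] G * q) = 0 := by
  suffices ∀ i k, i + k = n + 1 →
      polyIntegral a b (derivative^[i] G * derivative^[k] q) = 0 from
    this (n + 1) 0 rfl
  intro i
  induction i with
  | zero =>
    intro k hk
    rw [iterate_derivative_eq_zero (p := q) (by omega), mul_zero, map_zero]
  | succ i ih =>
    intro k hk
    have boundary (t : ℝ) (hG : (X - C t) ^ n ∣ G) (hqt : q.eval t = 0) :
        (derivative^[i] G).eval t * (derivative^[k] q).eval t = 0 := by
      rcases Nat.eq_zero_or_pos k with rfl | hk0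
      · simp [hqt]
      · rw [eval_iterate_derivative_eq_zero_of_pow_dvd hG (by omega), zero_mul]
    rw [Function.iterate_succ_apply', polyIntegral_derivative_mul, boundary a ha hqa,
      boundary b hb hqb, ← Function.iterate_succ_apply' derivative k, ih (k + 1) (by omega)]
    simp

end PolyIntegral

def rodriguesPoly (n : ℕ) : ℝ[X] := X ^ n * (1 - X) ^ n * (C (n : ℝ) * X + 1)

lemma rodriguesPoly_natDegree_le (n : ℕ) : (rodriguesPoly n).natDegree ≤ 2 * n + 1 := by
  unfold rodriguesPoly
  compute_degree
  omega

lemma pow_dvd_rodriguesPoly_zero (n : ℕ) : (X - C 0) ^ n ∣ rodriguesPoly n :=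
  ⟨(1 - X) ^ n * (C (n : ℝ) * X + 1), by rw [rodriguesPoly]; simp; ring⟩

lemma pow_dvd_rodriguesPoly_one (n : ℕ) : (X - C 1) ^ n ∣ rodriguesPoly n :=
  ⟨(-X) ^ n * (C (n : ℝ) * X + 1), by
    rw [rodriguesPoly, ← neg_sub, neg_pow, neg_pow]; simp; ring⟩

lemma eval_iterate_derivative_rodriguesPoly_zero (n : ℕ) :
    (derivative^[n] (rodriguesPoly n)).eval 0 = n.factorial := by
  rw [eval_iterate_derivative_eq_factorial_mul_coeff_taylor, taylor_zero, rodriguesPoly,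
    mul_assoc, coeff_X_pow_mul', if_pos le_rfl, Nat.sub_self, coeff_zero_eq_eval_zero]
  simp

lemma eval_iterate_derivative_succ_rodriguesPoly_zero (n : ℕ) :
    (derivative^[n + 1] (rodriguesPoly n)).eval 0 = 0 := by
  rw [eval_iterate_derivative_eq_factorial_mul_coeff_taylor, taylor_zero, rodriguesPoly,
    mul_assoc, coeff_X_pow_mul_succ]
  simp [derivative_pow]

lemma eval_iterate_derivative_succ_rodriguesPoly_one (n : ℕ) :
    (derivative^[n + 1] (rodriguesPoly n)).eval 1 =
      (n + 1).factorial * ((-1) ^ n * (n * (n + 2))) := by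
  have h : taylor 1 (rodriguesPoly n) =
      X ^ n * ((-1) ^ n * (X + 1) ^ n * (C (n : ℝ) * X + C ((n : ℝ) + 1))) := by
    simp only [taylor_apply, rodriguesPoly, mul_comp, pow_comp, X_comp, sub_comp, one_comp,
      add_comp, C_comp, map_add, map_one]
    ring
  rw [eval_iterate_derivative_eq_factorial_mul_coeff_taylor, h, coeff_X_pow_mul_succ]
  congr 1
  simp [derivative_pow]
  ring

lemma polyIntegral_iterate_derivative_succ_rodriguesPoly_mul_one_sub_X {n : ℕ} (hn : n ≠ 0) :
    polyIntegral 0 1 (derivative^[n + 1] (rodriguesPoly n) * (1 - X)) = -n.factorial := by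
  obtain ⟨m, rfl⟩ : ∃ m, n = m + 1 := ⟨n - 1, by omega⟩
  have hD : polyIntegral 0 1 (derivative^[m + 1] (rodriguesPoly (m + 1))) = 0 := by
    rw [Function.iterate_succ_apply', polyIntegral_derivative,
      eval_iterate_derivative_eq_zero_of_pow_dvd (pow_dvd_rodriguesPoly_zero _) (by omega),
      eval_iterate_derivative_eq_zero_of_pow_dvd (pow_dvd_rodriguesPoly_one _) (by omega),
      sub_zero]
  have h1X : derivative (1 - X : ℝ[X]) = -1 := by simp
  rw [Function.iterate_succ_apply', polyIntegral_derivative_mul,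
    eval_iterate_derivative_rodriguesPoly_zero, h1X, mul_neg_one, map_neg, hD]
  simp

def rPoly (n : ℕ) : ℝ[X] :=
  C ((-1 : ℝ) ^ n / (n * (n + 2) * (n + 1).factorial)) * derivative^[n + 1] (rodriguesPoly n)

lemma rPoly_eval_zero (n : ℕ) : (rPoly n).eval 0 = 0 := by
  rw [rPoly, eval_mul, eval_iterate_derivative_succ_rodriguesPoly_zero, mul_zero]

lemma rPoly_eval_one {n : ℕ} (hn : n ≠ 0) : (rPoly n).eval 1 = 1 := by
  rw [rPoly, eval_mul, eval_C, eval_iterate_derivative_succ_rodriguesPoly_one]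
  field_simp
  rw [← pow_mul, pow_mul', neg_one_sq, one_pow]

lemma rPoly_natDegree_le (n : ℕ) : (rPoly n).natDegree ≤ n :=
  (natDegree_C_mul_le _ _).trans <| (natDegree_iterate_derivative _ _).trans <| by
    have := rodriguesPoly_natDegree_le n
    omega

lemma polyIntegral_rPoly_mul_eq_zero {n : ℕ} {q : ℝ[X]} (hq0 : q.eval 0 = 0)
    (hq1 : q.eval 1 = 0) (hq : q.natDegree ≤ n) : polyIntegral 0 1 (rPoly n * q) = 0 := by
  rw [rPoly, mul_assoc, ← smul_eq_C_mul, map_smul, polyIntegral_iterate_derivative_mul_eq_zero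
    (pow_dvd_rodriguesPoly_zero n) (pow_dvd_rodriguesPoly_one n) hq0 hq1 hq, smul_zero]

lemma polyIntegral_rPoly_mul_one_sub_X {n : ℕ} (hn : n ≠ 0) :
    polyIntegral 0 1 (rPoly n * (1 - X)) = (-1) ^ (n + 1) / (n * (n + 1) * (n + 2)) := by
  rw [rPoly, mul_assoc, ← smul_eq_C_mul, map_smul,
    polyIntegral_iterate_derivative_succ_rodriguesPoly_mul_one_sub_X hn, smul_eq_mul,
    Nat.factorial_succ]
  push_cast
  field_simp
  ring

lemma memLp_indicator_eval (P : ℝ[X]) :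
    MemLp ((Ico 0 1).indicator fun y => P.eval y) 2 (volume.restrict (Ioo (0 : ℝ) 1)) := by
  obtain ⟨C, hC⟩ := isCompact_Icc.exists_bound_of_continuousOn (s := Icc (0 : ℝ) 1)
    P.continuousOn
  refine .of_bound (P.continuous.measurable.indicator measurableSet_Ico).aestronglyMeasurable C ?_
  refine (ae_restrict_iff' measurableSet_Ioo).2 (ae_of_all _ fun x hx => ?_)
  rw [indicator_of_mem (Ioo_subset_Ico_self hx)]
  exact hC x (Ioo_subset_Icc_self hx)

def polyL2 : ℝ[X] →ₗ[ℝ] L2I where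
  toFun P := toL2I ((Ico 0 1).indicator fun y => P.eval y)
  map_add' P Q := by
    simp only [toL2I, dif_pos (memLp_indicator_eval _)]
    rw [← MemLp.toLp_add]
    congr 1
    ext x
    by_cases hx : x ∈ Ico (0 : ℝ) 1 <;> simp [hx]
  map_smul' c P := by
    simp only [toL2I, dif_pos (memLp_indicator_eval _)]
    rw [← MemLp.toLp_const_smul]
    congr 1
    ext x
    by_cases hx : x ∈ Ico (0 : ℝ) 1 <;> simp [hx]

lemma polyL2_apply (P : ℝ[X]) : polyL2 P = toL2I ((Ico 0 1).indicator fun y => P.eval y) := rfl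

lemma inner_polyL2 (P Q : ℝ[X]) : inner ℝ (polyL2 P) (polyL2 Q) = polyIntegral 0 1 (P * Q) := by
  simp only [polyL2_apply, toL2I, dif_pos (memLp_indicator_eval _)]
  rw [L2.inner_def, polyIntegral_apply, intervalIntegral.integral_of_le zero_le_one,
    integral_Ioc_eq_integral_Ioo]
  refine integral_congr_ae ?_
  filter_upwards [(memLp_indicator_eval P).coeFn_toLp, (memLp_indicator_eval Q).coeFn_toLp,
    ae_restrict_mem measurableSet_Ioo] with x hP hQ hx
  rw [hP, hQ, indicator_of_mem (Ioo_subset_Ico_self hx),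
    indicator_of_mem (Ioo_subset_Ico_self hx)]
  simp [mul_comm]

lemma rI_eq_polyL2 : rI = polyL2 X := by
  simp [rI, polyL2_apply]

lemma lI_eq_polyL2 : lI = polyL2 (1 - X) := by
  simp [lI, polyL2_apply]

lemma polyL2_X_mul_one_sub_X_mul (p : ℝ[X]) : polyL2 (X * (1 - X) * p) =
    toL2I fun x => Set.indicator (Set.Ico (0 : ℝ) 1) (fun y => y * (1 - y) * p.eval y) x := by
  simp [polyL2_apply]

lemma X_mul_one_sub_X_dvd {D : ℝ[X]} (h0 : D.eval 0 = 0) (h1 : D.eval 1 = 0) :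
    X * (1 - X) ∣ D := by
  have hcop : IsCoprime (X - C (0 : ℝ)) (X - C 1) := isCoprime_X_sub_C_of_isUnit_sub (by norm_num)
  have := hcop.mul_dvd (dvd_iff_isRoot.2 h0) (dvd_iff_isRoot.2 h1)
  rwa [C_0, sub_zero, ← neg_sub, mul_neg, neg_dvd, map_one] at this

lemma natDegree_X_mul_one_sub_X_mul_le_iff {q : ℝ[X]} {n : ℕ} :
    (X * (1 - X) * q).natDegree ≤ n ↔ q = 0 ∨ q.natDegree + 2 ≤ n := by
  rcases eq_or_ne q 0 with rfl | hq
  · simp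
  · have h2 : (X * (1 - X) : ℝ[X]).natDegree = 2 := by compute_degree!
    rw [natDegree_mul (ne_zero_of_natDegree_gt (n := 0) (by omega)) hq, h2]
    simp [hq, add_comm]

lemma polyL2_mem_Usub {n : ℕ} {D : ℝ[X]} (h0 : D.eval 0 = 0) (h1 : D.eval 1 = 0)
    (hD : D.natDegree ≤ n) : polyL2 D ∈ Usub n := by
  obtain ⟨q, rfl⟩ := X_mul_one_sub_X_dvd h0 h1
  exact Submodule.subset_span
    ⟨q, natDegree_X_mul_one_sub_X_mul_le_iff.1 hD, polyL2_X_mul_one_sub_X_mul q⟩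

lemma polyL2_mem_orthogonal_Usub {n : ℕ} {P : ℝ[X]}
    (hP : ∀ D : ℝ[X], D.eval 0 = 0 → D.eval 1 = 0 → D.natDegree ≤ n →
      polyIntegral 0 1 (P * D) = 0) :
    polyL2 P ∈ (Usub n)ᗮ := by
  have : Usub n ≤ LinearMap.ker (innerₛₗ ℝ (polyL2 P)) := by
    refine Submodule.span_le.2 ?_
    rintro _ ⟨p, hp, rfl⟩
    rw [SetLike.mem_coe, ← polyL2_X_mul_one_sub_X_mul, LinearMap.mem_ker, innerₛₗ_apply_apply,
      inner_polyL2]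
    exact hP _ (by simp) (by simp) (natDegree_X_mul_one_sub_X_mul_le_iff.2 hp)
  exact (Submodule.mem_orthogonal' _ _).2 fun u hu => this hu

lemma projC_eq_of_mem_of_sub_mem_orthogonal {K : Submodule ℝ L2I} {f g : L2I} (hg : g ∈ K)
    (hfg : f - g ∈ Kᗮ) : projC K f = g :=
  Submodule.eq_starProjection_of_mem_orthogonal (K.le_topologicalClosure hg)
    (by rwa [Submodule.orthogonal_closure])

lemma inner_sub_projC_sub_projC (K : Submodule ℝ L2I) (f g : L2I) :
    inner ℝ (f - projC K f) (g - projC K g) = inner ℝ (f - projC K f) g := by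
  have hf : f - projC K f ∈ K.topologicalClosureᗮ :=
    K.topologicalClosure.sub_starProjection_mem_orthogonal f
  rw [inner_sub_right,
    Submodule.inner_left_of_mem_orthogonal (u := projC K g) (SetLike.coe_mem _) hf, sub_zero]

lemma rI_sub_projC_Usub {n : ℕ} (hn : n ≠ 0) : rI - projC (Usub n) rI = polyL2 (rPoly n) := by
  have hproj : projC (Usub n) rI = polyL2 (X - rPoly n) := by
    refine projC_eq_of_mem_of_sub_mem_orthogonal (polyL2_mem_Usub ?_ ?_ ?_) ?_
    · simp [rPoly_eval_zero]
    · simp [rPoly_eval_one hn]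
    · exact (natDegree_sub_le _ _).trans
        (max_le (natDegree_X_le.trans (by omega)) (rPoly_natDegree_le n))
    · rw [rI_eq_polyL2, ← map_sub, sub_sub_cancel]
      exact polyL2_mem_orthogonal_Usub fun D h0 h1 hD => polyIntegral_rPoly_mul_eq_zero h0 h1 hD
  rw [hproj, rI_eq_polyL2, ← map_sub, sub_sub_cancel]

end OrthoPoly

open OrthoPoly in
theorem inner_rn_ln (n : ℕ) (hn : 1 ≤ n) :
    (inner ℝ (rI - projC (Usub n) rI) (lI - projC (Usub n) lI) : ℝ) =
      (-1) ^ (n + 1) / (n * (n + 1) * (n + 2)) := by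
  rw [inner_sub_projC_sub_projC, rI_sub_projC_Usub (by omega), lI_eq_polyL2, inner_polyL2,
    polyIntegral_rPoly_mul_one_sub_X (by omega)]
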